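/- Let X be a topological space, A ⊆ X a nonempty Fσ and Gδ subset, and fix x₀ ∈ A. For f : A → ℝ of the first Borel class, define f̄ : X → ℝ by f̄(x) = f(x) for x ∈ A and f̄(x) = f(x₀) for x ∉ A. Then f̄ is of the first Borel class on X. -/
import Mathlib


open Set Filter Topology

def IsFSigma {X : Type*} [TopologicalSpace X] (s : Set X) : Prop :=
  ∃ F : ℕ → Set X, (∀ n, IsClosed (F n)) ∧ s = ⋃ n, F n

def FirstBorelClass {X Y : Type*} [TopologicalSpace X] [TopologicalSpace Y] (f : X → Y) : Prop :=
  ∀ U : Set Y, IsOpen U → IsFSigma (f ⁻¹' U)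

lemma IsFSigma.union' {X : Type*} [TopologicalSpace X] {s t : Set X}
    (hs : IsFSigma s) (ht : IsFSigma t) : IsFSigma (s ∪ t) := by
  obtain ⟨F, hF, rfl⟩ := hs
  obtain ⟨G, hG, rfl⟩ := ht
  exact ⟨fun n => F n ∪ G n, fun n => (hF n).union (hG n),
    (Set.iUnion_union_distrib F G).symm⟩

lemma isFSigma_iUnion_pair {X : Type*} [TopologicalSpace X] (G : ℕ × ℕ → Set X)
    (h : ∀ p, IsClosed (G p)) : IsFSigma (⋃ p, G p) := by
  let e : ℕ ≃ ℕ × ℕ := (Denumerable.eqv (ℕ × ℕ)).symm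
  exact ⟨fun n => G (e n), fun n => h _, (e.surjective.iUnion_comp G).symm⟩

lemma isFSigma_compl_of_isGδ {X : Type*} [TopologicalSpace X] {s : Set X}
    (h : IsGδ s) : IsFSigma sᶜ := by
  obtain ⟨T, hTopen, hTc, rfl⟩ := h
  rcases T.eq_empty_or_nonempty with rfl | hne
  · exact ⟨fun _ => ∅, fun _ => isClosed_empty, by simp⟩
  · obtain ⟨g, rfl⟩ := hTc.exists_eq_range hne
    refine ⟨fun n => (g n)ᶜ, fun n => (hTopen _ (mem_range_self n)).isClosed_compl, ?_⟩
    rw [sInter_range, compl_iInter]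

theorem constant_extension_firstBorelClass {X : Type*} [TopologicalSpace X] (A : Set X)
    (hFσ : IsFSigma A) (hGδ : IsGδ A)
    (x₀ : X) (hx₀ : x₀ ∈ A)
    (f : A → ℝ) (hf : FirstBorelClass f)
    (fbar : X → ℝ)
    (h₁ : ∀ (x : X) (hx : x ∈ A), fbar x = f ⟨x, hx⟩)
    (h₂ : ∀ x ∉ A, fbar x = f ⟨x₀, hx₀⟩) :
    FirstBorelClass fbar := by
  intro U hU
  obtain ⟨FA, hFA, hAeq⟩ := hFσ
  obtain ⟨G, hG, hGeq⟩ := hf U hU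
  choose C hC hCeq using fun n => (isClosed_induced_iff.mp (hG n))
  have hinA : ∀ (x : X) (hx : x ∈ A), (fbar x ∈ U ↔ x ∈ ⋃ p : ℕ × ℕ, (C p.1 ∩ FA p.2)) := by
    intro x hx
    rw [h₁ x hx]
    constructor
    · intro hfx
      have hm : (⟨x, hx⟩ : A) ∈ ⋃ n, G n := by rw [← hGeq]; exact hfx
      obtain ⟨n, hn⟩ := mem_iUnion.mp hm
      have hxC : x ∈ C n := by rw [← hCeq n] at hn; exact hn
      obtain ⟨m, hmm⟩ := mem_iUnion.mp (hAeq ▸ hx)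
      exact mem_iUnion.mpr ⟨(n, m), hxC, hmm⟩
    · intro hmem
      obtain ⟨⟨n, m⟩, hxC, _⟩ := mem_iUnion.mp hmem
      have hxG : (⟨x, hx⟩ : A) ∈ G n := by rw [← hCeq n]; exact hxC
      have : (⟨x, hx⟩ : A) ∈ f ⁻¹' U := by rw [hGeq]; exact mem_iUnion.mpr ⟨n, hxG⟩
      exact this
  have hFσU : IsFSigma (⋃ p : ℕ × ℕ, (C p.1 ∩ FA p.2)) :=
    isFSigma_iUnion_pair _ (fun p => (hC p.1).inter (hFA p.2))
  have hsub : ∀ x ∈ ⋃ p : ℕ × ℕ, (C p.1 ∩ FA p.2), x ∈ A := by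
    intro x hmem
    obtain ⟨p, _, hp2⟩ := mem_iUnion.mp hmem
    exact hAeq ▸ mem_iUnion.mpr ⟨p.2, hp2⟩
  by_cases hfx₀ : f ⟨x₀, hx₀⟩ ∈ U
  · have key : fbar ⁻¹' U = (⋃ p : ℕ × ℕ, (C p.1 ∩ FA p.2)) ∪ Aᶜ := by
      ext x
      by_cases hx : x ∈ A
      · simp only [mem_preimage, mem_union, hinA x hx]
        exact ⟨Or.inl, fun h => h.resolve_right (fun hc => hc hx)⟩
      · simp only [mem_preimage, h₂ x hx, mem_union]
        exact ⟨fun _ => Or.inr hx, fun _ => hfx₀⟩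
    rw [key]
    exact hFσU.union' (isFSigma_compl_of_isGδ hGδ)
  · have key : fbar ⁻¹' U = ⋃ p : ℕ × ℕ, (C p.1 ∩ FA p.2) := by
      ext x
      by_cases hx : x ∈ A
      · simp only [mem_preimage, hinA x hx]
      · simp only [mem_preimage, h₂ x hx]
        exact ⟨fun h => absurd h hfx₀, fun h => absurd (hsub x h) hx⟩
    rw [key]
    exact hFσU
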